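/- arXiv:2203.16146 — 3 statements merged into one kernel-verified Lean document; each statement's English description precedes it below -/
import Mathlib

section
/- Let n ≥ 2 be an integer, h a real constant, and I ⊆ ℝ an open interval. Let f, b : ℝ → ℝ be three times differentiable on I with b(t) > 0 and f(t) ≠ 0 for all t ∈ I. If f''(t) + (n−1)(b''(t)/b(t)) f(t) + h = 0 and f(t) b''(t) − f'(t) b'(t) = h b(t) for all t ∈ I, then b(t) b'''(t) + (n−1) b'(t) b''(t) = 0 for all t ∈ I; consequently the function t ↦ b(t)^{n−1} b''(t) is constant on I. -/
/-!
Differentiating the second equation gives `f b''' - f'' b' = h b'`, since `f b'' - f' b'` is the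
Wronskian of `f` and `b'`. Eliminating `f''` with the first equation leaves
`f (b''' + (n-1) b' b'' / b) = 0`, and `f ≠ 0` gives `b b''' + (n-1) b' b'' = 0`. This is
`b^{n-2}`-times the derivative of `b^{n-1} b''`, which is therefore constant on the interval.
-/

open Filter Topology

theorem hasDerivAt_wronskian {u v : ℝ → ℝ} {t : ℝ} (hu : DifferentiableAt ℝ u t)
    (hu' : DifferentiableAt ℝ (deriv u) t) (hv : DifferentiableAt ℝ v t)
    (hv' : DifferentiableAt ℝ (deriv v) t) :
    HasDerivAt (fun s ↦ u s * deriv v s - deriv u s * v s)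
      (u t * deriv (deriv v) t - deriv (deriv u) t * v t) t :=
  ((hu.hasDerivAt.mul hv'.hasDerivAt).sub (hu'.hasDerivAt.mul hv.hasDerivAt)).congr_deriv
    (by ring)

theorem mul_add_mul_eq_zero_of_ode {m h f f'' b b' b'' b''' : ℝ} (hb : b ≠ 0) (hf : f ≠ 0)
    (h₁ : f'' + m * (b'' / b) * f + h = 0) (h₂ : f * b''' - f'' * b' = h * b') :
    b * b''' + m * b' * b'' = 0 := by
  have h₁' : b * f'' + m * b'' * f + h * b = 0 := by
    field_simp at h₁
    linear_combination h₁
  refine (mul_eq_zero.mp ?_).resolve_left hf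
  linear_combination b * h₂ + b' * h₁'

theorem hasDerivAt_pow_mul_eq_zero {u v : ℝ → ℝ} {u' v' t : ℝ} {m : ℕ} (hm : 1 ≤ m)
    (hu : HasDerivAt u u' t) (hv : HasDerivAt v v' t) (h : u t * v' + m * u' * v t = 0) :
    HasDerivAt (fun s ↦ u s ^ m * v s) 0 t := by
  refine ((hu.pow m).mul hv).congr_deriv ?_
  obtain ⟨k, rfl⟩ := Nat.exists_eq_add_of_le' hm
  simp only [Pi.pow_apply, Nat.add_sub_cancel, pow_succ]
  linear_combination u t ^ k * h

/-- Lemma 5.3: the ODE system `f'' + (n−1)(b''/b) f + h = 0` and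
`f b'' − f' b' = h b` forces `b b''' + (n−1) b' b'' = 0`, hence
`b^{n−1} b''` is constant on the interval. -/
theorem stmt_7 (n : ℕ) (hn : 2 ≤ n) (h : ℝ) (I : Set ℝ)
    (hIopen : IsOpen I) (hIinterval : I.OrdConnected)
    (f b : ℝ → ℝ)
    (hf : ∀ t ∈ I, DifferentiableAt ℝ f t)
    (hf' : ∀ t ∈ I, DifferentiableAt ℝ (deriv f) t)
    (hb : ∀ t ∈ I, DifferentiableAt ℝ b t)
    (hb' : ∀ t ∈ I, DifferentiableAt ℝ (deriv b) t)
    (hb'' : ∀ t ∈ I, DifferentiableAt ℝ (deriv (deriv b)) t)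
    (hbpos : ∀ t ∈ I, 0 < b t)
    (hfne : ∀ t ∈ I, f t ≠ 0)
    (heq1 : ∀ t ∈ I,
      deriv (deriv f) t + ((n : ℝ) - 1) * (deriv (deriv b) t / b t) * f t + h = 0)
    (heq2 : ∀ t ∈ I,
      f t * deriv (deriv b) t - deriv f t * deriv b t = h * b t) :
    (∀ t ∈ I,
      b t * deriv (deriv (deriv b)) t + ((n : ℝ) - 1) * deriv b t * deriv (deriv b) t = 0) ∧
    ∀ t ∈ I, ∀ t' ∈ I,
      b t ^ (n - 1) * deriv (deriv b) t = b t' ^ (n - 1) * deriv (deriv b) t' := by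
  have hb''' : ∀ t ∈ I,
      b t * deriv (deriv (deriv b)) t + ((n : ℝ) - 1) * deriv b t * deriv (deriv b) t = 0 := by
    intro t ht
    have hwronskian : ∀ᶠ s in 𝓝 t,
        f s * deriv (deriv b) s - deriv f s * deriv b s = h * b s :=
      eventually_of_mem (hIopen.mem_nhds ht) heq2
    have hderiv := ((hb t ht).hasDerivAt.const_mul h).congr_of_eventuallyEq hwronskian
    exact mul_add_mul_eq_zero_of_ode (hbpos t ht).ne' (hfne t ht) (heq1 t ht)
      ((hasDerivAt_wronskian (hf t ht) (hf' t ht) (hb' t ht) (hb'' t ht)).unique hderiv)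
  refine ⟨hb''', fun t ht t' ht' ↦ ?_⟩
  have hcast : ((n - 1 : ℕ) : ℝ) = (n : ℝ) - 1 := by
    rw [Nat.cast_sub (by omega), Nat.cast_one]
  have hconst : ∀ s ∈ I, HasDerivAt (fun s ↦ b s ^ (n - 1) * deriv (deriv b) s) 0 s :=
    fun s hs ↦ hasDerivAt_pow_mul_eq_zero (by omega) (hb s hs).hasDerivAt (hb'' s hs).hasDerivAt
      (by rw [hcast]; linear_combination hb''' s hs)
  exact hIopen.is_const_of_deriv_eq_zero hIinterval.isPreconnected
    (fun s hs ↦ (hconst s hs).differentiableAt.differentiableWithinAt)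
    (fun s hs ↦ (hconst s hs).deriv) ht ht'
end

section
/- Let n ≥ 2 be an integer, h a real constant, and I ⊆ ℝ an open interval. Let f, b : ℝ → ℝ be sufficiently differentiable (f twice, b three times) on I with b(t) > 0 and f(t) > 0 for all t ∈ I. Assume f''(t) + (n−1)(b''(t)/b(t)) f(t) + h = 0 and f(t) b''(t) − f'(t) b'(t) = h b(t) on I. Define α(t) := −(n−1) b''(t)/b(t). Then for all t ∈ I: f'(t) · α'(t) = n α(t) · ( f(t) α(t)/(n−1) + h ). -/
/-!
Differentiating the second equation `f b'' − f' b' = h b` gives `f b''' − f'' b' = h b'`.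
Since `α' = −(n−1)(b''' b − b'' b')/b²`, multiplying by `f` lets this identity eliminate
`b'''`; the first equation then eliminates `f''` and the second one `f' b'`, leaving
`f' α' = n α (f α/(n−1) + h)`.
-/

open Filter Topology

lemma mul_deriv_deriv_deriv_sub_eq_of_eventuallyEq {f b : ℝ → ℝ} {h t : ℝ}
    (hf : DifferentiableAt ℝ f t) (hf' : DifferentiableAt ℝ (deriv f) t)
    (hb : DifferentiableAt ℝ b t) (hb' : DifferentiableAt ℝ (deriv b) t)
    (hb'' : DifferentiableAt ℝ (deriv (deriv b)) t)
    (heq : (fun s => f s * deriv (deriv b) s - deriv f s * deriv b s) =ᶠ[𝓝 t]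
      fun s => h * b s) :
    f t * deriv (deriv (deriv b)) t - deriv (deriv f) t * deriv b t = h * deriv b t := by
  have hlhs : HasDerivAt (fun s => f s * deriv (deriv b) s - deriv f s * deriv b s)
      (deriv f t * deriv (deriv b) t + f t * deriv (deriv (deriv b)) t
        - (deriv (deriv f) t * deriv b t + deriv f t * deriv (deriv b) t)) t :=
    (hf.hasDerivAt.mul hb''.hasDerivAt).sub (hf'.hasDerivAt.mul hb'.hasDerivAt)
  have hderiv := heq.deriv_eq
  rw [hlhs.deriv, (hb.hasDerivAt.const_mul h).deriv] at hderiv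
  linarith

lemma radial_ricci_identity_of_ode {n h F F₁ F₂ B B₁ B₂ B₃ : ℝ}
    (hn : n - 1 ≠ 0) (hF : F ≠ 0) (hB : B ≠ 0)
    (e₁ : F₂ + (n - 1) * (B₂ / B) * F + h = 0)
    (e₂ : F * B₂ - F₁ * B₁ = h * B)
    (e₃ : F * B₃ - F₂ * B₁ = h * B₁) :
    F₁ * (-(n - 1) * ((B₃ * B - B₂ * B₁) / B ^ 2)) =
      n * (-(n - 1) * (B₂ / B)) * (F * (-(n - 1) * (B₂ / B)) / (n - 1) + h) := by
  have e₁' : F₂ * B + (n - 1) * B₂ * F + h * B = 0 := by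
    field_simp at e₁
    linarith
  field_simp
  refine mul_left_cancel₀ hF ?_
  linear_combination (-F₁ * B) * e₃ + (-F₁ * B₁) * e₁' + (-n * F * B₂) * e₂

theorem stmt_8_general (n : ℕ) (hn : 2 ≤ n) (h : ℝ) (I : Set ℝ)
    (hIopen : IsOpen I)
    (f b : ℝ → ℝ)
    (hf : ∀ t ∈ I, DifferentiableAt ℝ f t)
    (hf' : ∀ t ∈ I, DifferentiableAt ℝ (deriv f) t)
    (hb : ∀ t ∈ I, DifferentiableAt ℝ b t)
    (hb' : ∀ t ∈ I, DifferentiableAt ℝ (deriv b) t)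
    (hb'' : ∀ t ∈ I, DifferentiableAt ℝ (deriv (deriv b)) t)
    (hbpos : ∀ t ∈ I, 0 < b t)
    (hfpos : ∀ t ∈ I, 0 < f t)
    (heq1 : ∀ t ∈ I,
      deriv (deriv f) t + ((n : ℝ) - 1) * (deriv (deriv b) t / b t) * f t + h = 0)
    (heq2 : ∀ t ∈ I,
      f t * deriv (deriv b) t - deriv f t * deriv b t = h * b t)
    (α : ℝ → ℝ)
    (hα : α = fun t => -(((n : ℝ) - 1)) * (deriv (deriv b) t / b t)) :
    ∀ t ∈ I,
      deriv f t * deriv α t =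
        (n : ℝ) * α t * (f t * α t / ((n : ℝ) - 1) + h) := by
  intro t ht
  subst hα
  have hn' : (n : ℝ) - 1 ≠ 0 := by
    have : (2 : ℝ) ≤ n := by exact_mod_cast hn
    linarith
  have hα' : HasDerivAt (fun s => -((n : ℝ) - 1) * (deriv (deriv b) s / b s)) _ t :=
    ((hb'' t ht).hasDerivAt.div (hb t ht).hasDerivAt (hbpos t ht).ne').const_mul _
  have e₃ := mul_deriv_deriv_deriv_sub_eq_of_eventuallyEq (hf t ht) (hf' t ht) (hb t ht)
    (hb' t ht) (hb'' t ht) (eventually_of_mem (hIopen.mem_nhds ht) heq2)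
  rw [hα'.deriv]
  exact radial_ricci_identity_of_ode hn' (hfpos t ht).ne' (hbpos t ht).ne' (heq1 t ht)
    (heq2 t ht) e₃

/-- Warped-product form of equation (eqn2022-2-12-2) of Lemma 5.1:
with `α = −(n−1) b''/b`, the ODE system yields
`f' α' = n α (f α/(n−1) + h)`. -/
theorem stmt_8 (n : ℕ) (hn : 2 ≤ n) (h : ℝ) (I : Set ℝ)
    (hIopen : IsOpen I) (hIinterval : I.OrdConnected)
    (f b : ℝ → ℝ)
    (hf : ∀ t ∈ I, DifferentiableAt ℝ f t)
    (hf' : ∀ t ∈ I, DifferentiableAt ℝ (deriv f) t)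
    (hb : ∀ t ∈ I, DifferentiableAt ℝ b t)
    (hb' : ∀ t ∈ I, DifferentiableAt ℝ (deriv b) t)
    (hb'' : ∀ t ∈ I, DifferentiableAt ℝ (deriv (deriv b)) t)
    (hbpos : ∀ t ∈ I, 0 < b t)
    (hfpos : ∀ t ∈ I, 0 < f t)
    (heq1 : ∀ t ∈ I,
      deriv (deriv f) t + ((n : ℝ) - 1) * (deriv (deriv b) t / b t) * f t + h = 0)
    (heq2 : ∀ t ∈ I,
      f t * deriv (deriv b) t - deriv f t * deriv b t = h * b t)
    (α : ℝ → ℝ)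
    (hα : α = fun t => -(((n : ℝ) - 1)) * (deriv (deriv b) t / b t)) :
    ∀ t ∈ I,
      deriv f t * deriv α t =
        (n : ℝ) * α t * (f t * α t / ((n : ℝ) - 1) + h) :=
  stmt_8_general n hn h I hIopen f b hf hf' hb hb' hb'' hbpos hfpos heq1 heq2 α hα
end

section
/- Let n ≥ 2 be an integer, h a real constant, and I ⊆ ℝ an open interval. Let f, b : ℝ → ℝ be sufficiently differentiable (f twice, b three times, α := −(n−1) b''/b twice differentiable) on I with b(t) > 0 and f(t) > 0 for all t ∈ I. Assume f''(t) + (n−1)(b''(t)/b(t)) f(t) + h = 0 and f(t) b''(t) − f'(t) b'(t) = h b(t) on I. If t₁ ∈ I satisfies f'(t₁) ≠ 0 and f(t₁) α(t₁) + (n−1) h = 0, then α'(t₁) = 0 and α''(t₁) = n α(t₁)² / (n−1). -/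
/-!
Differentiating `f b'' - f' b' = h b` and substituting `f'' + h = α f` from the first equation
gives `f b''' = α f b'`, so `b''' = α b'`. Since `α b = -(n-1) b''`, this yields the
identity `α' = -n α b'/b` on `I`. At `t₁` the condition `f α + (n-1) h = 0` reads `f b'' = h b`,
so the second equation forces `f' b' = 0`, i.e. `b'(t₁) = 0`. Hence `α'(t₁) = 0`, and
`α''(t₁) = -n α b''/b = n α² / (n-1)`.
-/

open Filter Topology

variable {f b α : ℝ → ℝ} {t c : ℝ}

theorem mul_deriv_deriv_deriv_eq_of_eventuallyEq {h : ℝ}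
    (hf : DifferentiableAt ℝ f t) (hf' : DifferentiableAt ℝ (deriv f) t)
    (hb : DifferentiableAt ℝ b t) (hb' : DifferentiableAt ℝ (deriv b) t)
    (hb'' : DifferentiableAt ℝ (deriv (deriv b)) t)
    (heq : ∀ᶠ s in 𝓝 t, f s * deriv (deriv b) s - deriv f s * deriv b s = h * b s) :
    f t * deriv (deriv (deriv b)) t = (deriv (deriv f) t + h) * deriv b t := by
  have hL := (hf.hasDerivAt.mul hb''.hasDerivAt).sub (hf'.hasDerivAt.mul hb'.hasDerivAt)
  have hR := (hb.hasDerivAt.const_mul h).congr_of_eventuallyEq heq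
  linear_combination hL.unique hR

theorem hasDerivAt_of_deriv_deriv_deriv_eq (hα : α = fun s => -c * (deriv (deriv b) s / b s))
    (hb : DifferentiableAt ℝ b t) (hb'' : DifferentiableAt ℝ (deriv (deriv b)) t)
    (hbt : b t ≠ 0) (h3 : deriv (deriv (deriv b)) t = α t * deriv b t) :
    HasDerivAt α (-(c + 1) * α t * (deriv b t / b t)) t := by
  subst hα
  have hd : HasDerivAt (fun s => -c * (deriv (deriv b) s / b s)) _ t :=
    (hb''.hasDerivAt.div hb.hasDerivAt hbt).const_mul (-c)
  convert hd using 1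
  rw [h3]
  field_simp
  ring

theorem deriv_deriv_eq_of_deriv_eq_zero (hαt_eq : α t = -c * (deriv (deriv b) t / b t))
    (hb : DifferentiableAt ℝ b t) (hb' : DifferentiableAt ℝ (deriv b) t)
    (hαt : DifferentiableAt ℝ α t) (hbt : b t ≠ 0)
    (hderiv : deriv α =ᶠ[𝓝 t] fun s => -(c + 1) * α s * (deriv b s / b s))
    (hb't : deriv b t = 0) :
    deriv (deriv α) t = (c + 1) * α t ^ 2 / c := by
  have hd : HasDerivAt (fun s => -(c + 1) * α s * (deriv b s / b s)) _ t :=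
    (hαt.hasDerivAt.const_mul (-(c + 1))).mul (hb'.hasDerivAt.div hb.hasDerivAt hbt)
  rw [hderiv.deriv_eq, hd.deriv, hb't, hαt_eq]
  field_simp
  ring

theorem stmt_9_general (n : ℕ) (hn : 2 ≤ n) (h : ℝ) (I : Set ℝ)
    (hIopen : IsOpen I)
    (f b : ℝ → ℝ)
    (hf : ∀ t ∈ I, DifferentiableAt ℝ f t)
    (hf' : ∀ t ∈ I, DifferentiableAt ℝ (deriv f) t)
    (hb : ∀ t ∈ I, DifferentiableAt ℝ b t)
    (hb' : ∀ t ∈ I, DifferentiableAt ℝ (deriv b) t)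
    (hb'' : ∀ t ∈ I, DifferentiableAt ℝ (deriv (deriv b)) t)
    (hbpos : ∀ t ∈ I, 0 < b t)
    (hfpos : ∀ t ∈ I, 0 < f t)
    (heq1 : ∀ t ∈ I,
      deriv (deriv f) t + ((n : ℝ) - 1) * (deriv (deriv b) t / b t) * f t + h = 0)
    (heq2 : ∀ t ∈ I,
      f t * deriv (deriv b) t - deriv f t * deriv b t = h * b t)
    (α : ℝ → ℝ)
    (hα : α = fun t => -(((n : ℝ) - 1)) * (deriv (deriv b) t / b t))
    (t₁ : ℝ) (ht₁ : t₁ ∈ I)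
    (hcrit : deriv f t₁ ≠ 0)
    (hval : f t₁ * α t₁ + ((n : ℝ) - 1) * h = 0) :
    deriv α t₁ = 0 ∧
      deriv (deriv α) t₁ = (n : ℝ) * (α t₁) ^ 2 / ((n : ℝ) - 1) := by
  have hc : (n : ℝ) - 1 ≠ 0 := by
    have : (2 : ℝ) ≤ n := by exact_mod_cast hn
    linarith
  have hb3 : ∀ t ∈ I, deriv (deriv (deriv b)) t = α t * deriv b t := fun t ht => by
    have key := mul_deriv_deriv_deriv_eq_of_eventuallyEq (hf t ht) (hf' t ht) (hb t ht)
      (hb' t ht) (hb'' t ht) (eventually_of_mem (hIopen.mem_nhds ht) heq2)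
    refine mul_left_cancel₀ (hfpos t ht).ne' ?_
    rw [key, hα]
    linear_combination deriv b t * heq1 t ht
  have hαderiv : ∀ t ∈ I, HasDerivAt α (-((n - 1 : ℝ) + 1) * α t * (deriv b t / b t)) t :=
    fun t ht => hasDerivAt_of_deriv_deriv_deriv_eq hα (hb t ht) (hb'' t ht) (hbpos t ht).ne'
      (hb3 t ht)
  have hfb'' : f t₁ * deriv (deriv b) t₁ = h * b t₁ := by
    rw [hα] at hval
    field_simp [(hbpos t₁ ht₁).ne'] at hval
    exact mul_left_cancel₀ hc (by linear_combination -hval)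
  have hb't₁ : deriv b t₁ = 0 :=
    (mul_eq_zero.mp (by linear_combination hfb'' - heq2 t₁ ht₁)).resolve_left hcrit
  refine ⟨by simp [(hαderiv t₁ ht₁).deriv, hb't₁], ?_⟩
  rw [deriv_deriv_eq_of_deriv_eq_zero (congrFun hα t₁) (hb t₁ ht₁) (hb' t₁ ht₁)
    (hαderiv t₁ ht₁).differentiableAt (hbpos t₁ ht₁).ne'
    (eventually_of_mem (hIopen.mem_nhds ht₁) fun t ht => (hαderiv t ht).deriv) hb't₁, sub_add_cancel]

/-- One-dimensional form of Lemma 5.6(1) with (eqn2022-2-20-5):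
at a point where `f α + (n−1) h = 0` and `f' ≠ 0`, one has `α' = 0` and
`α'' = n α²/(n−1)`, where `α = −(n−1) b''/b`. -/
theorem stmt_9 (n : ℕ) (hn : 2 ≤ n) (h : ℝ) (I : Set ℝ)
    (hIopen : IsOpen I) (hIinterval : I.OrdConnected)
    (f b : ℝ → ℝ)
    (hf : ∀ t ∈ I, DifferentiableAt ℝ f t)
    (hf' : ∀ t ∈ I, DifferentiableAt ℝ (deriv f) t)
    (hb : ∀ t ∈ I, DifferentiableAt ℝ b t)
    (hb' : ∀ t ∈ I, DifferentiableAt ℝ (deriv b) t)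
    (hb'' : ∀ t ∈ I, DifferentiableAt ℝ (deriv (deriv b)) t)
    (hbpos : ∀ t ∈ I, 0 < b t)
    (hfpos : ∀ t ∈ I, 0 < f t)
    (heq1 : ∀ t ∈ I,
      deriv (deriv f) t + ((n : ℝ) - 1) * (deriv (deriv b) t / b t) * f t + h = 0)
    (heq2 : ∀ t ∈ I,
      f t * deriv (deriv b) t - deriv f t * deriv b t = h * b t)
    (α : ℝ → ℝ)
    (hα : α = fun t => -(((n : ℝ) - 1)) * (deriv (deriv b) t / b t))
    (hαdiff : ∀ t ∈ I, DifferentiableAt ℝ α t)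
    (hαdiff' : ∀ t ∈ I, DifferentiableAt ℝ (deriv α) t)
    (t₁ : ℝ) (ht₁ : t₁ ∈ I)
    (hcrit : deriv f t₁ ≠ 0)
    (hval : f t₁ * α t₁ + ((n : ℝ) - 1) * h = 0) :
    deriv α t₁ = 0 ∧
      deriv (deriv α) t₁ = (n : ℝ) * (α t₁) ^ 2 / ((n : ℝ) - 1) :=
  stmt_9_general n hn h I hIopen f b hf hf' hb hb' hb'' hbpos hfpos heq1 heq2 α hα t₁ ht₁ hcrit hval
end
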